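/- Let X be a normed space of dimension at least 2. Then numerical radius parallelism on B(X) does not coincide with linear dependence: there exist T, S ∈ B(X) with T ∥_v S but T and S linearly independent. -/

import Mathlib

/-!
Take a unit vector `x₀`, a norming functional `f₀` with `f₀ x₀ = 1 = ‖f₀‖`, and the rank-one
projection `P = f₀ ⊗ x₀`. Both `I` and `P` have numerical radius `1`, attained at the same state
`(x₀, f₀)`, so `v(I + P) ≥ |f₀((I + P) x₀)| = 2` and `I ∥_v P`. In dimension at least `2` the
identity is not a multiple of a rank-one operator, so `I` and `P` are linearly independent.
-/

open Filter Topology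

variable {𝕜 : Type*} [RCLike 𝕜] {X : Type*} [NormedAddCommGroup X] [NormedSpace 𝕜 X]

/-- The numerical radius of a bounded linear operator on a normed space:
`v(T) = sup {|x*(Tx)| : x ∈ S_X, x* ∈ J(x)}`. -/
noncomputable def nrad (T : X →L[𝕜] X) : ℝ :=
  sSup {r : ℝ | ∃ (x : X) (f : X →L[𝕜] 𝕜), ‖x‖ = 1 ∧ ‖f‖ = 1 ∧ f x = 1 ∧ r = ‖f (T x)‖}

/-- Numerical radius parallelism: `T ∥_v S`. -/
def NRadParallel (T S : X →L[𝕜] X) : Prop :=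
  ∃ lam : 𝕜, ‖lam‖ = 1 ∧ nrad (T + lam • S) = nrad T + nrad S

/-- Numerical radius Birkhoff orthogonality: `T ⊥_{vB} S`. -/
def NRadBirkhoff (T S : X →L[𝕜] X) : Prop :=
  ∀ α : 𝕜, nrad T ≤ nrad (T + α • S)

section NumericalRadius

variable {T S : X →L[𝕜] X}

lemma nrad_nonneg (T : X →L[𝕜] X) : 0 ≤ nrad T :=
  Real.sSup_nonneg fun _ ⟨_, _, _, _, _, hr⟩ => hr ▸ norm_nonneg _

lemma nrad_le_of_forall_le {c : ℝ} (hc : 0 ≤ c)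
    (h : ∀ (x : X) (f : X →L[𝕜] 𝕜), ‖x‖ = 1 → ‖f‖ = 1 → f x = 1 → ‖f (T x)‖ ≤ c) :
    nrad T ≤ c :=
  Real.sSup_le (fun _ ⟨x, f, hx, hf, hfx, hr⟩ => hr ▸ h x f hx hf hfx) hc

lemma norm_apply_apply_le_opNorm {x : X} {f : X →L[𝕜] 𝕜} (hx : ‖x‖ = 1) (hf : ‖f‖ = 1) :
    ‖f (T x)‖ ≤ ‖T‖ :=
  calc ‖f (T x)‖ ≤ ‖f‖ * (‖T‖ * ‖x‖) :=
        (f.le_opNorm _).trans (mul_le_mul_of_nonneg_left (T.le_opNorm x) (norm_nonneg f))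
    _ = ‖T‖ := by rw [hf, hx, one_mul, mul_one]

lemma nrad_le_opNorm (T : X →L[𝕜] X) : nrad T ≤ ‖T‖ :=
  nrad_le_of_forall_le (norm_nonneg T) fun _ _ hx hf _ => norm_apply_apply_le_opNorm hx hf

lemma norm_apply_apply_le_nrad {x : X} {f : X →L[𝕜] 𝕜} (hx : ‖x‖ = 1) (hf : ‖f‖ = 1)
    (hfx : f x = 1) : ‖f (T x)‖ ≤ nrad T :=
  le_csSup ⟨‖T‖, fun _ ⟨_, _, hy, hg, _, hr⟩ => hr ▸ norm_apply_apply_le_opNorm hy hg⟩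
    ⟨x, f, hx, hf, hfx, rfl⟩

lemma nrad_add_le (T S : X →L[𝕜] X) : nrad (T + S) ≤ nrad T + nrad S :=
  nrad_le_of_forall_le (add_nonneg (nrad_nonneg T) (nrad_nonneg S)) fun x f hx hf hfx => by
    rw [add_apply, map_add]
    exact (norm_add_le _ _).trans
      (add_le_add (norm_apply_apply_le_nrad hx hf hfx) (norm_apply_apply_le_nrad hx hf hfx))

lemma nrad_eq_one_of_apply_eq_one (hT : ‖T‖ ≤ 1) {x : X} {f : X →L[𝕜] 𝕜} (hx : ‖x‖ = 1)
    (hf : ‖f‖ = 1) (hfx : f x = 1) (hTx : f (T x) = 1) : nrad T = 1 :=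
  le_antisymm ((nrad_le_opNorm T).trans hT)
    (by simpa [hTx] using norm_apply_apply_le_nrad (T := T) hx hf hfx)

lemma nradParallel_of_apply_eq_nrad {x : X} {f : X →L[𝕜] 𝕜} (hx : ‖x‖ = 1) (hf : ‖f‖ = 1)
    (hfx : f x = 1) (hTx : f (T x) = nrad T) (hSx : f (S x) = nrad S) : NRadParallel T S := by
  refine ⟨1, norm_one, le_antisymm (by rw [one_smul]; exact nrad_add_le T S) ?_⟩
  have hsum : f ((T + (1 : 𝕜) • S) x) = ((nrad T + nrad S : ℝ) : 𝕜) := by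
    simp [hTx, hSx]
  have := norm_apply_apply_le_nrad (T := T + (1 : 𝕜) • S) hx hf hfx
  rwa [hsum, RCLike.norm_ofReal, abs_of_nonneg (add_nonneg (nrad_nonneg T) (nrad_nonneg S))]
    at this

end NumericalRadius

lemma exists_state [Nontrivial X] :
    ∃ (x : X) (f : X →L[𝕜] 𝕜), ‖x‖ = 1 ∧ ‖f‖ = 1 ∧ f x = 1 := by
  obtain ⟨v, hv⟩ := exists_ne (0 : X)
  have hx : ‖(‖v‖⁻¹ : 𝕜) • v‖ = 1 := norm_smul_inv_norm hv
  obtain ⟨f, hf, hfx⟩ := exists_dual_vector 𝕜 _ (hx.symm ▸ one_ne_zero)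
  exact ⟨_, f, hx, hf, by rw [hfx, hx, RCLike.ofReal_one]⟩

lemma linearIndependent_id_smulRight (hdim : 2 ≤ Module.rank 𝕜 X) {x : X} {f : X →L[𝕜] 𝕜}
    (hfx : f x = 1) : LinearIndependent 𝕜 ![ContinuousLinearMap.id 𝕜 X, f.smulRight x] := by
  have hx : x ≠ 0 := by rintro rfl; simp at hfx
  obtain ⟨y, hy⟩ : ∃ y : X, ∀ r : 𝕜, r • x ≠ y := by
    by_contra! h
    exact absurd (hdim.trans (rank_le_one_iff.mpr ⟨x, h⟩)) (by norm_num)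
  rw [LinearIndependent.pair_iff]
  intro s t hst
  have happ (z : X) : s • z + (t * f z) • x = 0 := by
    simpa [smul_smul] using congrArg (fun A : X →L[𝕜] X => A z) hst
  have hst' : s + t = 0 := by
    simpa [hfx, ← add_smul, hx] using happ x
  have hs : s = 0 := by
    have hsy : s • (y - f y • x) = 0 := by
      rw [← happ y, eq_neg_of_add_eq_zero_right hst']
      module
    exact (smul_eq_zero.mp hsy).resolve_right (sub_ne_zero.mpr (hy (f y)).symm)
  exact ⟨hs, by simpa [hs] using hst'⟩

theorem stmt3 (hdim : 2 ≤ Module.rank 𝕜 X) :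
    ∃ T S : X →L[𝕜] X, NRadParallel T S ∧ LinearIndependent 𝕜 ![T, S] := by
  have : Nontrivial X := rank_pos_iff_nontrivial.mp (lt_of_lt_of_le (by norm_num) hdim)
  obtain ⟨x, f, hx, hf, hfx⟩ := exists_state (𝕜 := 𝕜) (X := X)
  have hPx : f (f.smulRight x x) = 1 := by simp [hfx]
  have hP : ‖f.smulRight x‖ ≤ 1 := by
    rw [ContinuousLinearMap.norm_smulRight_apply, hf, hx, one_mul]
  have hnradId := nrad_eq_one_of_apply_eq_one ContinuousLinearMap.norm_id_le hx hf hfx hfx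
  have hnradP := nrad_eq_one_of_apply_eq_one hP hx hf hfx hPx
  refine ⟨_, _, nradParallel_of_apply_eq_nrad hx hf hfx ?_ ?_,
    linearIndependent_id_smulRight hdim hfx⟩
  · rw [hnradId, ContinuousLinearMap.id_apply, hfx, RCLike.ofReal_one]
  · rw [hnradP, hPx, RCLike.ofReal_one]
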